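/- In the setting of the previous statement, if A = B ∪ ⋃_{f∈K∖{1}} g_f n_f B is a subgroup of G, then π(A) = K and [G : A] = [F : K]·[N : B]. -/

import Mathlib

/-!
Every piece `g_f n_f B` lies over `f`, so `π(A) = K` and `A ∩ N = B` (only the piece `B` lies
over `1`). The index formula is then `[G : A] = [G/N : π(A)] · [N : A ∩ N]`, which holds for any
subgroup `A` and normal `N`, because `N/(A ∩ N) → AN/A` is a bijection of coset spaces.
-/

namespace Subgroup

variable {G : Type*} [Group G]

theorem relIndex_sup_of_normal_right (H K : Subgroup G) [K.Normal] :
    H.relIndex (H ⊔ K) = H.relIndex K := by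
  refine (Nat.card_congr (Equiv.ofBijective _
    ⟨(quotientSubgroupOfEmbeddingOfLE H (le_sup_right : K ≤ H ⊔ K)).injective, ?_⟩)).symm
  refine fun q => QuotientGroup.induction_on q fun ⟨x, hx⟩ => ?_
  obtain ⟨k, hk, h, hh, rfl⟩ := mem_sup_of_normal_left.mp (sup_comm H K ▸ hx)
  refine ⟨(⟨k, hk⟩ : K), ?_⟩
  rw [quotientSubgroupOfEmbeddingOfLE_apply_mk, QuotientGroup.eq]
  simpa [mem_subgroupOf] using hh

theorem index_eq_index_map_mk'_mul_relIndex (H K : Subgroup G) [K.Normal] :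
    H.index = (H.map (QuotientGroup.mk' K)).index * H.relIndex K := by
  rw [index_map, QuotientGroup.ker_mk', (QuotientGroup.mk' K).range_eq_top_of_surjective
    (QuotientGroup.mk'_surjective K), index_top, mul_one, ← relIndex_sup_of_normal_right,
    mul_comm, relIndex_mul_index le_sup_left]

end Subgroup

section CosetUnion

variable {G F : Type*} [Group G] [Group F]

def cosetUnion (g n : F → G) (B : Subgroup G) (K : Subgroup F) : Set G :=
  (B : Set G) ∪ ⋃ f ∈ ((K : Set F) \ {1}), (fun b => g f * n f * b) '' (B : Set G)

theorem mem_cosetUnion {g n : F → G} {B : Subgroup G} {K : Subgroup F} {x : G} :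
    x ∈ cosetUnion g n B K ↔ x ∈ B ∨ ∃ f ∈ K, f ≠ 1 ∧ ∃ b ∈ B, g f * n f * b = x := by
  simp only [cosetUnion, Set.mem_union, Set.mem_iUnion, Set.mem_sdiff, Set.mem_image,
    SetLike.mem_coe, Set.mem_singleton_iff, exists_prop, and_assoc]

variable {N : Subgroup G} [N.Normal] {g n : G ⧸ N → G} {B : Subgroup G}
  (hg : ∀ f, QuotientGroup.mk' N (g f) = f) (hn : ∀ f, n f ∈ N) (hBN : B ≤ N)
include hg hn hBN

theorem mk'_mul_mul_of_mem (f : G ⧸ N) {b : G} (hb : b ∈ B) :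
    QuotientGroup.mk' N (g f * n f * b) = f := by
  rw [map_mul, map_mul, hg, QuotientGroup.mk'_apply, QuotientGroup.mk'_apply,
    (QuotientGroup.eq_one_iff _).mpr (hn f),
    (QuotientGroup.eq_one_iff _).mpr (hBN hb), mul_one, mul_one]

variable {K : Subgroup (G ⧸ N)} {A : Subgroup G} (hA : (A : Set G) = cosetUnion g n B K)
include hA

theorem map_mk'_eq_of_coe_eq_cosetUnion : A.map (QuotientGroup.mk' N) = K := by
  have hmem (x : G) : x ∈ A ↔ _ := (Set.ext_iff.mp hA x).trans mem_cosetUnion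
  refine le_antisymm ?_ fun f hfK => ?_
  · rintro _ ⟨x, hx, rfl⟩
    rcases (hmem x).mp hx with hxB | ⟨f, hfK, -, b, hb, rfl⟩
    · have hx1 : QuotientGroup.mk' N x = 1 := (QuotientGroup.eq_one_iff x).mpr (hBN hxB)
      exact hx1 ▸ K.one_mem
    · rwa [mk'_mul_mul_of_mem hg hn hBN f hb]
  · by_cases hf1 : f = 1
    · exact hf1 ▸ ⟨1, A.one_mem, map_one _⟩
    · exact ⟨g f * n f * 1, (hmem _).mpr (Or.inr ⟨f, hfK, hf1, 1, B.one_mem, rfl⟩),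
        mk'_mul_mul_of_mem hg hn hBN f B.one_mem⟩

theorem inf_eq_of_coe_eq_cosetUnion : A ⊓ N = B := by
  have hmem (x : G) : x ∈ A ↔ _ := (Set.ext_iff.mp hA x).trans mem_cosetUnion
  refine le_antisymm ?_ (le_inf (fun b hb => (hmem b).mpr (Or.inl hb)) hBN)
  rintro x ⟨hxA, hxN⟩
  rcases (hmem x).mp hxA with hxB | ⟨f, -, hf1, b, hb, rfl⟩
  · exact hxB
  · refine absurd ?_ hf1
    rw [← mk'_mul_mul_of_mem hg hn hBN f hb]
    exact (QuotientGroup.eq_one_iff _).mpr hxN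

end CosetUnion

theorem stmt15_general {G : Type*} [Group G] (N : Subgroup G) [N.Normal]
    (g : (G ⧸ N) → G) (hg : ∀ f, QuotientGroup.mk' N (g f) = f)
    (K : Subgroup (G ⧸ N))
    (n : (G ⧸ N) → G) (hn : ∀ f, n f ∈ N)
    (B : Subgroup G) (hBN : B ≤ N)
    (A : Subgroup G)
    (hA : (A : Set G) =
      (B : Set G) ∪
        ⋃ f ∈ ((K : Set (G ⧸ N)) \ {1}),
          (fun b => g f * n f * b) '' (B : Set G)) :
    A.map (QuotientGroup.mk' N) = K ∧
      A.index = K.index * B.relIndex N := by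
  have hmap := map_mk'_eq_of_coe_eq_cosetUnion hg hn hBN hA
  refine ⟨hmap, ?_⟩
  rw [Subgroup.index_eq_index_map_mk'_mul_relIndex A N, hmap, ← Subgroup.inf_relIndex_right,
    inf_eq_of_coe_eq_cosetUnion hg hn hBN hA]

/-- If the coset union `A = B ∪ ⋃_{f ∈ K∖{1}} g_f n_f B` is a subgroup of `G`,
then `π(A) = K` and `[G : A] = [F : K] · [N : B]`. -/
theorem stmt15 {G : Type*} [Group G] (N : Subgroup G) [N.Normal]
    [Finite (G ⧸ N)]
    (g : (G ⧸ N) → G) (hg : ∀ f, QuotientGroup.mk' N (g f) = f)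
    (hg1 : g 1 = 1) (hginv : ∀ f, g f⁻¹ = (g f)⁻¹)
    (K : Subgroup (G ⧸ N))
    (n : (G ⧸ N) → G) (hn : ∀ f, n f ∈ N) (hn1 : n 1 = 1)
    (B : Subgroup G) (hBN : B ≤ N) (hBfin : (B.subgroupOf N).FiniteIndex)
    (A : Subgroup G)
    (hA : (A : Set G) =
      (B : Set G) ∪
        ⋃ f ∈ ((K : Set (G ⧸ N)) \ {1}),
          (fun b => g f * n f * b) '' (B : Set G)) :
    A.map (QuotientGroup.mk' N) = K ∧
      A.index = K.index * B.relIndex N :=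
  stmt15_general N g hg K n hn B hBN A hA
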